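/- The minor poset of the chain of length n with its minimal generating set is isomorphic to the Boolean algebra B_{n+1}. -/

import Mathlib

/-!
In a chain, a generator enriched lattice `M` is determined by the finite set
`insert M.z M.gens`, whose least element is `z`, and every nonempty finite set arises this way.
Deletion and contraction only shrink this set, because a join of elements of a chain is one of
them; conversely any nonempty subset is reached by contracting its least element (if that is a
generator) and deleting the surplus generators. So sending the adjoined minimum to `∅`
identifies the minor poset of the chain `Fin (n + 1)` with its lattice of subsets.
-/

open Finset

/-- A generator-enriched lattice datum inside an ambient lattice `L`:
a minimal element `z` together with a finite generating set of elements
strictly above `z`. The underlying set of elements consists of all joins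
of `z` with subsets of the generating set. -/
structure GEL (L : Type*) [Lattice L] [DecidableEq L] where
  z : L
  gens : Finset L
  lt_gens : ∀ g ∈ gens, z < g

namespace GEL

variable {L K : Type*} [Lattice L] [OrderBot L] [DecidableEq L]

/-- The underlying set of elements of a generator enriched lattice. -/
def carrier (M : GEL L) : Finset L :=
  M.gens.powerset.image fun X => X.sup id ⊔ M.z

/-- Deletion of a set of generators. -/
def delete (M : GEL L) (I : Finset L) : GEL L :=
  ⟨M.z, M.gens \ I, fun g hg => M.lt_gens g (Finset.mem_sdiff.mp hg).1⟩

/-- Restriction to a set of generators. -/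
def restrict (M : GEL L) (I : Finset L) : GEL L :=
  M.delete (M.gens \ I)

/-- Contraction by a set of generators. -/
def contract (M : GEL L) (I : Finset L) : GEL L :=
  ⟨I.sup id ⊔ M.z,
   (M.gens.image fun g => g ⊔ (I.sup id ⊔ M.z)).erase (I.sup id ⊔ M.z),
   fun g hg => by
     obtain ⟨hne, hg'⟩ := Finset.mem_erase.mp hg
     obtain ⟨h, -, rfl⟩ := Finset.mem_image.mp hg'
     exact lt_of_le_of_ne le_sup_right (Ne.symm hne)⟩

open Classical in
/-- Contraction by an element: contract by all generators below it. -/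
noncomputable def contractEl (M : GEL L) (ℓ : L) : GEL L :=
  M.contract (M.gens.filter fun g => g ≤ ℓ)

/-- A single deletion or contraction step. -/
def Step (M N : GEL L) : Prop :=
  ∃ I ⊆ M.gens, N = M.delete I ∨ N = M.contract I

/-- `Minor M N` : `N` is a minor of `M`, i.e. obtained from `M` by a finite
sequence of deletions and contractions. -/
def Minor (M N : GEL L) : Prop :=
  Relation.ReflTransGen Step M N

/-- The generator enriched lattice on a lattice with `⊥`, with the given generating set. -/
def ofGens (G : Finset L) (hG : ∀ g ∈ G, (⊥ : L) < g) : GEL L :=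
  ⟨⊥, G, hG⟩

/-- The underlying type of the minor poset of `T`: all minors of `T`
together with an adjoined minimum `none`. -/
abbrev MP (T : GEL L) := Option {M : GEL L // T.Minor M}

/-- The order relation of the minor poset. -/
def mple (T : GEL L) : MP T → MP T → Prop
  | none, _ => True
  | some _, none => False
  | some A, some B => B.1.Minor A.1

/-- The rank function of the minor poset. -/
def mrank (T : GEL L) : MP T → ℕ
  | none => 0
  | some A => A.1.gens.card + 1

/-- A parallel: an element `ℓ` and distinct generators `g, h` with
`g ⊔ ℓ = h ⊔ ℓ ≠ ℓ`. -/
def HasParallel (M : GEL L) : Prop :=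
  ∃ ℓ ∈ M.carrier, ∃ g ∈ M.gens, ∃ h ∈ M.gens,
    g ≠ h ∧ g ⊔ ℓ = h ⊔ ℓ ∧ g ⊔ ℓ ≠ ℓ

/-- Isomorphism of generator enriched lattices: a join-preserving bijection of the
underlying sets carrying the generating set onto the generating set. -/
def GIso [Lattice K] [OrderBot K] [DecidableEq K] (M : GEL L) (N : GEL K) : Prop :=
  ∃ f : L → K, Set.BijOn f ↑M.carrier ↑N.carrier ∧
    (∀ a ∈ M.carrier, ∀ b ∈ M.carrier, f (a ⊔ b) = f a ⊔ f b) ∧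
    f '' ↑M.gens = ↑N.gens

open Classical in
/-- The image generator enriched lattice `⟨f(I) | f(z)⟩` of a strong map. -/
noncomputable def map [Lattice K] [DecidableEq K] (f : L → K) (M : GEL L) : GEL K :=
  ⟨f M.z, (M.gens.image f).filter fun y => f M.z < y,
   fun g hg => (Finset.mem_filter.mp hg).2⟩

/-- `T` lifts join irreducibles: for every `ℓ` and generator `g` with `g ≰ ℓ`,
the element `g ⊔ ℓ` is join irreducible in the interval `[ℓ, ⊤]`. -/
def LiftsJI (T : GEL L) : Prop :=
  ∀ ℓ : L, ∀ g ∈ T.gens, ¬ g ≤ ℓ →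
    ∀ a b : L, ℓ ≤ a → ℓ ≤ b → g ⊔ ℓ = a ⊔ b → g ⊔ ℓ = a ∨ g ⊔ ℓ = b

end GEL

/-- The chain of length `n` with its minimal generating set `{1, …, n}`. -/
noncomputable def chainGEL (n : ℕ) : GEL (Fin (n + 1)) :=
  GEL.ofGens ((Finset.univ : Finset (Fin (n + 1))).erase ⊥)
    (fun g hg => bot_lt_iff_ne_bot.mpr (Finset.mem_erase.mp hg).1)

namespace GEL

section Lattice

variable {L : Type*} [Lattice L] [DecidableEq L]

@[ext]
theorem ext {M N : GEL L} (hz : M.z = N.z) (hgens : M.gens = N.gens) : M = N := by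
  cases M; cases N; simp_all

theorem z_notMem_gens (M : GEL L) : M.z ∉ M.gens :=
  fun h => (M.lt_gens _ h).false

theorem isLeast_insert_z_gens (M : GEL L) : IsLeast ↑(insert M.z M.gens) M.z := by
  refine ⟨mem_insert_self _ _, ?_⟩
  simp only [coe_insert, mem_lowerBounds, Set.mem_insert_iff, mem_coe, forall_eq_or_imp, le_refl,
    true_and]
  exact fun g hg => (M.lt_gens g hg).le

theorem eq_of_insert_z_gens_eq {M N : GEL L} (h : insert M.z M.gens = insert N.z N.gens) :
    M = N := by
  have hz : M.z = N.z := (isLeast_insert_z_gens M).unique (h ▸ isLeast_insert_z_gens N)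
  ext1
  · exact hz
  · rw [← erase_insert M.z_notMem_gens, ← erase_insert N.z_notMem_gens, h, hz]

variable [OrderBot L]

theorem step_of_z_eq_of_gens_subset {M N : GEL L} (hz : N.z = M.z) (hgens : N.gens ⊆ M.gens) :
    M.Step N :=
  ⟨M.gens \ N.gens, sdiff_subset, Or.inl (ext hz (Finset.sdiff_sdiff_eq_self hgens).symm)⟩

theorem contract_singleton_z (M : GEL L) {x : L} (hx : M.z ≤ x) : (M.contract {x}).z = x := by
  simp [contract, hx]

theorem mem_contract_singleton_gens (M : GEL L) {x g : L} (hx : M.z ≤ x) (hg : g ∈ M.gens)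
    (hxg : x < g) : g ∈ (M.contract {x}).gens := by
  simp only [contract, sup_singleton, id_eq, sup_eq_left.mpr hx, mem_erase, mem_image]
  exact ⟨hxg.ne', g, hg, sup_eq_left.mpr hxg.le⟩

theorem minor_of_insert_subset {M N : GEL L} (h : insert N.z N.gens ⊆ insert M.z M.gens) :
    M.Minor N := by
  have hNz := h (mem_insert_self _ _)
  have hle : M.z ≤ N.z := (isLeast_insert_z_gens M).2 hNz
  have hgens : N.gens ⊆ M.gens := fun g hg =>
    (mem_insert.mp (h (mem_insert_of_mem hg))).resolve_left (hle.trans_lt (N.lt_gens g hg)).ne'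
  rcases mem_insert.mp hNz with hz | hz
  · exact .single (step_of_z_eq_of_gens_subset hz hgens)
  · refine .head ⟨{N.z}, singleton_subset_iff.mpr hz, Or.inr rfl⟩ (.single ?_)
    exact step_of_z_eq_of_gens_subset (contract_singleton_z M hle).symm
      fun g hg => mem_contract_singleton_gens M hle (hgens hg) (N.lt_gens g hg)

end Lattice

section LinearOrder

variable {L : Type*} [LinearOrder L]

def ofFinset (s : Finset L) (hs : s.Nonempty) : GEL L :=
  ⟨s.min' hs, s.erase (s.min' hs),
    fun g hg => (s.min'_le g (mem_of_mem_erase hg)).lt_of_ne (ne_of_mem_erase hg).symm⟩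

theorem insert_z_gens_ofFinset (s : Finset L) (hs : s.Nonempty) :
    insert (ofFinset s hs).z (ofFinset s hs).gens = s :=
  insert_erase (s.min'_mem hs)

variable [OrderBot L]

theorem sup_sup_z_mem_insert (M : GEL L) {I : Finset L} (hI : I ⊆ M.gens) :
    I.sup id ⊔ M.z ∈ insert M.z M.gens := by
  obtain ⟨b, hb, hsup⟩ := exists_mem_eq_sup (insert M.z I) (insert_nonempty _ _) id
  rw [sup_comm, ← id_eq M.z, ← sup_insert, hsup]
  exact insert_subset_insert _ hI hb

theorem insert_subset_of_step {M N : GEL L} (h : M.Step N) :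
    insert N.z N.gens ⊆ insert M.z M.gens := by
  obtain ⟨I, hI, rfl | rfl⟩ := h
  · exact insert_subset_insert _ sdiff_subset
  · refine insert_subset_iff.mpr ⟨M.sup_sup_z_mem_insert hI, fun x hx => ?_⟩
    obtain ⟨g, hg, rfl⟩ := mem_image.mp (mem_of_mem_erase hx)
    exact sup_ind _ _ (mem_insert_of_mem hg) (M.sup_sup_z_mem_insert hI)

theorem minor_iff_insert_subset {M N : GEL L} :
    M.Minor N ↔ insert N.z N.gens ⊆ insert M.z M.gens := by
  refine ⟨fun h => ?_, minor_of_insert_subset⟩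
  induction h with
  | refl => exact subset_rfl
  | tail _ hstep ih => exact (insert_subset_of_step hstep).trans ih

end LinearOrder

namespace MP

section Lattice

variable {L : Type*} [Lattice L] [OrderBot L] [DecidableEq L] {T : GEL L}

def toFinset : MP T → Finset L
  | none => ∅
  | some M => insert M.1.z M.1.gens

theorem toFinset_injective : Function.Injective (toFinset (T := T)) := by
  rintro (_ | M) (_ | N) h
  · rfl
  · exact absurd h.symm (insert_ne_empty _ _)
  · exact absurd h (insert_ne_empty _ _)
  · exact congrArg some (Subtype.ext (eq_of_insert_z_gens_eq h))

end Lattice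

theorem mple_iff_toFinset_subset {L : Type*} [LinearOrder L] [OrderBot L] {T : GEL L}
    (a b : MP T) : T.mple a b ↔ a.toFinset ⊆ b.toFinset := by
  rcases a with _ | A <;> rcases b with _ | B
  case some.some => exact minor_iff_insert_subset
  all_goals simp [mple, toFinset]

end MP

end GEL

theorem chainGEL_minor {n : ℕ} (M : GEL (Fin (n + 1))) : (chainGEL n).Minor M :=
  GEL.minor_of_insert_subset (by simp [chainGEL, GEL.ofGens])

theorem toFinset_chainGEL_surjective (n : ℕ) :
    Function.Surjective (GEL.MP.toFinset (T := chainGEL n)) := by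
  intro s
  rcases s.eq_empty_or_nonempty with rfl | hs
  · exact ⟨none, rfl⟩
  · exact ⟨some ⟨GEL.ofFinset s hs, chainGEL_minor _⟩, GEL.insert_z_gens_ofFinset s hs⟩

/-- The minor poset of the chain of length `n` with its minimal generating set
is isomorphic to the Boolean algebra `B_{n+1}`. -/
theorem minorPoset_chain_iso_boolean (n : ℕ) :
    ∃ e : GEL.MP (chainGEL n) ≃ Finset (Fin (n + 1)),
      ∀ a b : GEL.MP (chainGEL n), GEL.mple (chainGEL n) a b ↔ e a ⊆ e b :=
  ⟨.ofBijective _ ⟨GEL.MP.toFinset_injective, toFinset_chainGEL_surjective n⟩,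
    GEL.MP.mple_iff_toFinset_subset⟩
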